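/- There exists a constant C > 0 such that for all integers n ≥ 2 and all integers k with 1 ≤ k ≤ n−1: | log( ∏_{j=1}^{k} 2·sin(jπ/n) ) + (n/π)·Λ(kπ/n) | ≤ C·log n. [The Garoufalidis–Lê asymptotic log|{⌊α⌋}!| = −(n/π)Λ(πα/n) + O(log n), used in the proof of Theorem 6.2.] -/

import Mathlib

open Finset Filter Real

/-- The sine factorial `(k)!_n = ∏_{j=1}^k 2 sin(jπ/n)`. -/
noncomputable def sf (n k : ℕ) : ℝ :=
  ∏ j ∈ Finset.Icc 1 k, 2 * Real.sin (j * Real.pi / n)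

/-- The Lobachevsky function `Λ(x) = -∫₀ˣ log|2 sin t| dt`. -/
noncomputable def lob (x : ℝ) : ℝ := -∫ t in (0:ℝ)..x, Real.log |2 * Real.sin t|

/-!
With `h = π / n` and `f t = log (2 sin t)`, the quantity is the error
`∑_{j<k} (f ((j+1) h) - ⨍ t in j h..(j+1) h, f t)` of the right-endpoint rule for
`∫₀^{kh} f`. Concavity of `sin` on `[0, π]` makes `sin t / t` decreasing and
`sin t / (π - t)` increasing, so the increments of `f` are squeezed between those of
`log (π - t)` and of `log t`. Each cell error is therefore bounded by a difference of
logarithms, and these telescope: the total lies between `log (π - k h) - log π ≥ -log n`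
and `1 + log k`, where `1` is the mean of `log (h / t)` over `(0, h)`, the one cell that
meets the singularity of `f`.
-/

open MeasureTheory

theorem sum_sub_inv_mul_integral_eq_sum_sub_interval_average
    {g : ℝ → ℝ} (hg : ∀ a b : ℝ, IntervalIntegrable g volume a b)
    (h : ℝ) (k : ℕ) :
    ∑ j ∈ range k, g ((j + 1) * h) - h⁻¹ * ∫ t in (0 : ℝ)..k * h, g t =
      ∑ j ∈ range k, (g ((j + 1) * h) - ⨍ t in j * h..(j + 1) * h, g t) := by
  have hsplit := intervalIntegral.sum_integral_adjacent_intervals (μ := volume)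
    (a := fun j : ℕ => j * h) (f := g) (n := k) fun j _ => hg _ _
  simp only [Nat.cast_zero, zero_mul, Nat.cast_add, Nat.cast_one] at hsplit
  rw [← hsplit, mul_sum, ← sum_sub_distrib]
  refine sum_congr rfl fun j _ => ?_
  rw [interval_average_eq, smul_eq_mul, show (j + 1) * h - j * h = h by ring]

section

variable {g φ : ℝ → ℝ} {a b : ℝ}

theorem sub_interval_average_le (hab : a < b) (hg : IntervalIntegrable g volume a b)
    (hφ : IntervalIntegrable φ volume a b) (hle : ∀ t ∈ Set.Ioo a b, g b - g t ≤ φ t) :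
    g b - ⨍ t in a..b, g t ≤ ⨍ t in a..b, φ t := by
  have hba : 0 < b - a := sub_pos.2 hab
  have := intervalIntegral.integral_mono_on_of_le_Ioo hab.le intervalIntegrable_const (hg.add hφ)
    fun t ht => show g b ≤ g t + φ t by linarith [hle t ht]
  rw [intervalIntegral.integral_const, intervalIntegral.integral_add hg hφ, smul_eq_mul] at this
  rw [interval_average_eq_div, interval_average_eq_div, sub_le_iff_le_add, ← add_div,
    le_div_iff₀ hba]
  linarith

theorem interval_average_le_sub (hab : a < b) (hg : IntervalIntegrable g volume a b)
    (hφ : IntervalIntegrable φ volume a b) (hle : ∀ t ∈ Set.Ioo a b, φ t ≤ g b - g t) :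
    ⨍ t in a..b, φ t ≤ g b - ⨍ t in a..b, g t := by
  have hba : 0 < b - a := sub_pos.2 hab
  have := intervalIntegral.integral_mono_on_of_le_Ioo hab.le (hg.add hφ) intervalIntegrable_const
    fun t ht => show g t + φ t ≤ g b by linarith [hle t ht]
  rw [intervalIntegral.integral_const, intervalIntegral.integral_add hg hφ, smul_eq_mul] at this
  rw [interval_average_eq_div, interval_average_eq_div, le_sub_iff_add_le, ← add_div,
    div_le_iff₀ hba]
  linarith

theorem interval_average_const_of_ne (hab : a ≠ b) (c : ℝ) : ⨍ _ in a..b, c = c := by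
  simp [interval_average_eq, sub_ne_zero.2 hab.symm]

theorem interval_average_log_sub_log (hb : 0 < b) : ⨍ t in (0 : ℝ)..b, (log b - log t) = 1 := by
  rw [interval_average_eq, intervalIntegral.integral_sub intervalIntegrable_const
    intervalIntegral.intervalIntegrable_log', integral_log, intervalIntegral.integral_const]
  simp only [sub_zero, smul_eq_mul, log_zero, mul_zero, add_zero, sub_sub_cancel]
  field_simp

end

theorem mul_sin_le_mul_sin {x y : ℝ} (hx : 0 ≤ x) (hxy : x ≤ y) (hy : y ≤ π) :
    x * sin y ≤ y * sin x := by
  rcases hxy.eq_or_lt with rfl | hxy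
  · rfl
  have hy0 : 0 < y := hx.trans_lt hxy
  have := strictConcaveOn_sin_Icc.concaveOn.2 (Set.left_mem_Icc.2 pi_pos.le) ⟨hy0.le, hy⟩
    (div_nonneg (sub_nonneg.2 hxy.le) hy0.le) (div_nonneg hx hy0.le) (by field_simp; ring)
  simp only [smul_eq_mul, mul_zero, sin_zero, zero_add, div_mul_cancel₀ x hy0.ne'] at this
  rw [div_mul_eq_mul_div, div_le_iff₀ hy0] at this
  linarith

theorem log_two_mul_sin_sub_le {t b : ℝ} (ht : 0 < t) (htb : t ≤ b) (hb : b < π) :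
    log (2 * sin b) - log (2 * sin t) ≤ log b - log t := by
  have hsin_t := sin_pos_of_pos_of_lt_pi ht (htb.trans_lt hb)
  have hb0 := ht.trans_le htb
  have hsin_b := sin_pos_of_pos_of_lt_pi hb0 hb
  rw [sub_le_sub_iff, ← log_mul (by positivity) (by positivity),
    ← log_mul (by positivity) (by positivity)]
  refine log_le_log (by positivity) ?_
  nlinarith [mul_sin_le_mul_sin ht.le htb hb.le]

theorem log_pi_sub_sub_le {t b : ℝ} (ht : 0 < t) (htb : t ≤ b) (hb : b < π) :
    log (π - b) - log (π - t) ≤ log (2 * sin b) - log (2 * sin t) := by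
  have hsin_t := sin_pos_of_pos_of_lt_pi ht (htb.trans_lt hb)
  have hsin_b := sin_pos_of_pos_of_lt_pi (ht.trans_le htb) hb
  have key := mul_sin_le_mul_sin (sub_pos.2 hb).le (sub_le_sub_left htb π) (by linarith)
  rw [sin_pi_sub, sin_pi_sub] at key
  rw [sub_le_sub_iff, ← log_mul (by linarith) (by positivity),
    ← log_mul (by positivity) (by linarith)]
  refine log_le_log (by nlinarith) ?_
  nlinarith

theorem intervalIntegrable_log_two_mul_sin (a b : ℝ) :
    IntervalIntegrable (fun t => log (2 * sin t)) volume a b :=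
  (analyticOnNhd_const.mul analyticOnNhd_sin).meromorphicOn.intervalIntegrable_log

theorem le_log_two_mul_sin_sub_interval_average {a b : ℝ} (ha : 0 ≤ a) (hab : a < b)
    (hb : b < π) :
    log (π - b) - log (π - a) ≤ log (2 * sin b) - ⨍ t in a..b, log (2 * sin t) := by
  rw [← interval_average_const_of_ne hab.ne (log (π - b) - log (π - a))]
  refine interval_average_le_sub (g := fun t => log (2 * sin t)) hab
    (intervalIntegrable_log_two_mul_sin a b) intervalIntegrable_const fun t ht => ?_
  calc log (π - b) - log (π - a) ≤ log (π - b) - log (π - t) := by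
        gcongr
        · linarith [ht.2]
        · exact ht.1.le
    _ ≤ _ := log_pi_sub_sub_le (ha.trans_lt ht.1) ht.2.le hb

theorem log_two_mul_sin_sub_interval_average_le {a b : ℝ} (ha : 0 < a) (hab : a < b)
    (hb : b < π) :
    log (2 * sin b) - ⨍ t in a..b, log (2 * sin t) ≤ log b - log a := by
  rw [← interval_average_const_of_ne hab.ne (log b - log a)]
  refine sub_interval_average_le (g := fun t => log (2 * sin t)) hab
    (intervalIntegrable_log_two_mul_sin a b) intervalIntegrable_const fun t ht => ?_
  calc log (2 * sin b) - log (2 * sin t) ≤ log b - log t :=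
        log_two_mul_sin_sub_le (ha.trans ht.1) ht.2.le hb
    _ ≤ log b - log a := by gcongr; exact ht.1.le

theorem log_two_mul_sin_sub_interval_average_zero_le_one {b : ℝ} (hb0 : 0 < b) (hb : b < π) :
    log (2 * sin b) - ⨍ t in (0 : ℝ)..b, log (2 * sin t) ≤ 1 := by
  rw [← interval_average_log_sub_log hb0]
  exact sub_interval_average_le (g := fun t => log (2 * sin t)) hb0
    (intervalIntegrable_log_two_mul_sin 0 b)
    (intervalIntegrable_const.sub intervalIntegral.intervalIntegrable_log')
    fun t ht => log_two_mul_sin_sub_le ht.1 ht.2.le hb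

section

variable {h : ℝ} {k : ℕ}

theorem log_pi_sub_sub_log_pi_le_sum (hh : 0 < h) (hk : k * h < π) :
    log (π - k * h) - log π ≤ ∑ j ∈ range k,
      (log (2 * sin ((j + 1) * h)) - ⨍ t in j * h..(j + 1) * h, log (2 * sin t)) := by
  have htelescope := sum_range_sub (fun j : ℕ => log (π - j * h)) k
  simp only [Nat.cast_add, Nat.cast_one, Nat.cast_zero, zero_mul, sub_zero] at htelescope
  rw [← htelescope]
  refine sum_le_sum fun j hj => ?_
  have hjk : (j : ℝ) + 1 ≤ k := by exact_mod_cast Nat.succ_le_of_lt (mem_range.1 hj)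
  exact le_log_two_mul_sin_sub_interval_average (by positivity) (by linarith)
    (by nlinarith)

theorem sum_le_one_add_log (hh : 0 < h) (hk : k * h < π) :
    ∑ j ∈ range k,
      (log (2 * sin ((j + 1) * h)) - ⨍ t in j * h..(j + 1) * h, log (2 * sin t)) ≤
      1 + log k := by
  rcases k with _ | m
  · simp
  have htelescope := sum_range_sub (fun j : ℕ => log ((j + 1) * h)) m
  simp only [Nat.cast_add, Nat.cast_one, Nat.cast_zero, zero_add, one_mul] at htelescope
  rw [log_mul (by positivity) hh.ne', add_sub_cancel_right] at htelescope
  push_cast at hk ⊢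
  rw [sum_range_succ', add_comm, ← htelescope]
  simp only [CharP.cast_eq_zero, zero_add, zero_mul, one_mul]
  gcongr ?_ + ?_
  · exact log_two_mul_sin_sub_interval_average_zero_le_one hh (by nlinarith)
  · refine sum_le_sum fun j hj => ?_
    have hjm : (j : ℝ) + 1 ≤ m := by exact_mod_cast Nat.succ_le_of_lt (mem_range.1 hj)
    push_cast
    exact log_two_mul_sin_sub_interval_average_le (by positivity) (by nlinarith) (by nlinarith)

end

theorem log_sf {n k : ℕ} (hk : k < n) :
    log (sf n k) = ∑ j ∈ range k, log (2 * sin ((j + 1) * (π / n))) := by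
  have hpos : ∀ j ∈ range k, 0 < 2 * sin ((j + 1) * (π / n)) := by
    intro j hj
    have hjn : (j : ℝ) + 1 < n := by
      exact_mod_cast (Nat.succ_le_of_lt (mem_range.1 hj)).trans_lt hk
    have hn : (0 : ℝ) < n := by linarith
    refine mul_pos two_pos (sin_pos_of_pos_of_lt_pi (by positivity) ?_)
    calc (j + 1) * (π / n) < n * (π / n) := by gcongr
      _ = π := by field_simp
  rw [← log_prod (fun j hj => (hpos j hj).ne'), sf, ← Ico_add_one_right_eq_Icc,
    prod_Ico_eq_prod_range]
  congr 1
  refine prod_congr (by simp) fun j _ => ?_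
  push_cast
  ring_nf

theorem lob_eq_neg_integral (x : ℝ) : lob x = -∫ t in (0 : ℝ)..x, log (2 * sin t) := by
  simp only [lob, log_abs]

theorem log_sf_add_mul_lob_eq_sum {n k : ℕ} (hk : k < n) :
    log (sf n k) + (n / π) * lob (k * π / n) = ∑ j ∈ range k,
      (log (2 * sin ((j + 1) * (π / n))) -
        ⨍ t in j * (π / n)..(j + 1) * (π / n), log (2 * sin t)) := by
  rw [log_sf hk, lob_eq_neg_integral, mul_neg, ← sub_eq_add_neg, mul_div_assoc,
    show (n : ℝ) / π = (π / n)⁻¹ by rw [inv_div],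
    sum_sub_inv_mul_integral_eq_sum_sub_interval_average
      intervalIntegrable_log_two_mul_sin]

theorem garoufalidis_le_asymptotics :
    ∃ C : ℝ, 0 < C ∧ ∀ n : ℕ, 2 ≤ n → ∀ k : ℕ, 1 ≤ k → k ≤ n - 1 →
      |Real.log (sf n k) + ((n : ℝ) / Real.pi) * lob (k * Real.pi / n)| ≤
        C * Real.log n := by
  refine ⟨3, by norm_num, fun n hn k hk1 hkn => ?_⟩
  have hn0 : (0 : ℝ) < n := by positivity
  have hkn' : (k : ℝ) + 1 ≤ n := by exact_mod_cast (by omega : k + 1 ≤ n)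
  have hh : 0 < π / n := by positivity
  have hnh : n * (π / n) = π := by field_simp
  have hkh : k * (π / n) < π := by nlinarith
  have hlower : -log n ≤ log (π - k * (π / n)) - log π := by
    have : log (π / n) ≤ log (π - k * (π / n)) := log_le_log hh (by nlinarith)
    rw [log_div pi_pos.ne' hn0.ne'] at this
    linarith
  have hupper : log k ≤ log n := log_le_log (by positivity) (by linarith)
  have hlog2 : 1 / 2 < log n :=
    (by linarith [log_two_gt_d9] : (1 : ℝ) / 2 < log 2).trans_le
      (log_le_log two_pos (by exact_mod_cast hn))
  rw [log_sf_add_mul_lob_eq_sum (by omega), abs_le]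
  constructor
  · linarith [log_pi_sub_sub_log_pi_le_sum hh hkh]
  · linarith [sum_le_one_add_log hh hkh]
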